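/- arXiv:math/9512224 — 5 statements merged into one kernel-verified Lean document; each statement's English description precedes it below -/
import Mathlib

section
/- For every natural number k, the following identity of polynomials in ℤ[q] holds: Σ_{i=0}^{⌊3k/2⌋} (−1)^i · q^(i(i−1)/2) · [3k−i choose i]_q = (−1)^k · q^(k(3k−1)/2), where [m choose n]_q denotes the Gaussian (q-)binomial coefficient. -/
/-!
Write `S n = ∑_{i+j=n} (-1)^j q^(j choose 2) [i choose j]_q` and let `T n` be the same sum with
`q^(j+1 choose 2)`. The two q-Pascal rules `[m+1, k+1] = q^(k+1) [m, k+1] + [m, k]` and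
`[m+1, k+1] = [m, k+1] + q^(m-k) [m, k]` give `S (n+2) = T (n+1) - T n` and
`T (n+2) = T (n+1) - q^(n+1) S n`, hence `S (n+3) = -q^(n+1) S n`. Since `S 0 = 1`, induction gives
`S (3k) = (-1)^k q^(1 + 4 + ⋯ + (3k-2))`.
-/

open Polynomial Finset

variable {R : Type*} [CommRing R]

theorem isRegular_one_sub_X_pow {n : ℕ} (hn : n ≠ 0) : IsRegular (1 - X ^ n : R[X]) := by
  have h := isUnit_one.neg.isRegular.mul (monic_X_pow_sub_C (1 : R) hn).isRegular
  rwa [C_1, neg_one_mul, neg_sub] at h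

theorem isRegular_prod_one_sub_X_pow_succ (k : ℕ) :
    IsRegular (∏ i ∈ range k, (1 - X ^ (i + 1)) : R[X]) :=
  IsRegular.prod fun i _ ↦ isRegular_one_sub_X_pow i.add_one_ne_zero

structure IsGaussBinomial (G : ℕ → ℕ → R[X]) : Prop where
  mul_prod : ∀ m k, k ≤ m →
    G m k * ∏ i ∈ range k, (1 - X ^ (i + 1)) = ∏ i ∈ range k, (1 - X ^ (m - i))
  eq_zero_of_lt : ∀ m k, m < k → G m k = 0

noncomputable def signedGaussSum (G : ℕ → ℕ → R[X]) (e : ℕ → ℕ) (n : ℕ) : R[X] :=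
  ∑ p ∈ antidiagonal n, (-1) ^ p.2 * X ^ e p.2 * G p.1 p.2

theorem signedGaussSum_eq_sum_range (G : ℕ → ℕ → R[X]) (e : ℕ → ℕ) (n : ℕ) :
    signedGaussSum G e n = ∑ i ∈ range (n + 1), (-1) ^ i * X ^ e i * G (n - i) i := by
  rw [signedGaussSum, ← Nat.sum_antidiagonal_swap]
  exact Nat.sum_antidiagonal_eq_sum_range_succ (fun i j ↦ (-1) ^ i * X ^ e i * G j i) n

namespace IsGaussBinomial

variable {G : ℕ → ℕ → R[X]}

theorem zero_right (hG : IsGaussBinomial G) (m : ℕ) : G m 0 = 1 := by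
  simpa using hG.mul_prod m 0 m.zero_le

theorem mul_one_sub_X_pow_succ (hG : IsGaussBinomial G) (m k : ℕ) :
    G m (k + 1) * (1 - X ^ (k + 1)) = G m k * (1 - X ^ (m - k)) := by
  rcases lt_trichotomy k m with hkm | rfl | hmk
  · refine (isRegular_prod_one_sub_X_pow_succ k).right ?_
    have hsucc := hG.mul_prod m (k + 1) hkm
    rw [prod_range_succ, prod_range_succ, ← hG.mul_prod m k hkm.le] at hsucc
    linear_combination hsucc
  · simp [hG.eq_zero_of_lt k (k + 1) k.lt_succ_self]
  · simp [hG.eq_zero_of_lt m k hmk, hG.eq_zero_of_lt m (k + 1) (by omega)]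

theorem succ_mul_one_sub_X_pow_succ (hG : IsGaussBinomial G) (m k : ℕ) :
    G (m + 1) (k + 1) * (1 - X ^ (k + 1)) = G m k * (1 - X ^ (m + 1)) := by
  rcases le_or_gt k m with hkm | hmk
  · refine (isRegular_prod_one_sub_X_pow_succ k).right ?_
    have hsucc := hG.mul_prod (m + 1) (k + 1) (by omega)
    rw [prod_range_succ, prod_range_succ'] at hsucc
    simp only [Nat.add_sub_add_right, Nat.sub_zero, ← hG.mul_prod m k hkm] at hsucc
    linear_combination hsucc
  · simp [hG.eq_zero_of_lt m k hmk, hG.eq_zero_of_lt (m + 1) (k + 1) (by omega)]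

theorem X_pow_mul_X_pow_sub_mul (hG : IsGaussBinomial G) (m k : ℕ) :
    X ^ k * (X ^ (m - k) * G m k) = X ^ m * G m k := by
  rcases le_or_gt k m with hkm | hmk
  · rw [← mul_assoc, ← pow_add, Nat.add_sub_cancel' hkm]
  · simp [hG.eq_zero_of_lt m k hmk]

theorem succ_succ (hG : IsGaussBinomial G) (m k : ℕ) :
    G (m + 1) (k + 1) = X ^ (k + 1) * G m (k + 1) + G m k := by
  refine (isRegular_one_sub_X_pow k.add_one_ne_zero).right ?_
  linear_combination hG.succ_mul_one_sub_X_pow_succ m k -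
    X ^ (k + 1) * hG.mul_one_sub_X_pow_succ m k + X * hG.X_pow_mul_X_pow_sub_mul m k

theorem succ_succ' (hG : IsGaussBinomial G) (m k : ℕ) :
    G (m + 1) (k + 1) = G m (k + 1) + X ^ (m - k) * G m k := by
  refine (isRegular_one_sub_X_pow k.add_one_ne_zero).right ?_
  linear_combination hG.succ_mul_one_sub_X_pow_succ m k -
    hG.mul_one_sub_X_pow_succ m k + X * hG.X_pow_mul_X_pow_sub_mul m k

theorem signedGaussSum_succ (hG : IsGaussBinomial G) (e : ℕ → ℕ) (n : ℕ) :
    signedGaussSum G e (n + 1) =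
      X ^ e 0 + ∑ p ∈ antidiagonal n, (-1) ^ (p.2 + 1) * X ^ e (p.2 + 1) * G p.1 (p.2 + 1) := by
  simp [signedGaussSum, Nat.sum_antidiagonal_succ', hG.zero_right]

theorem signedGaussSum_add_two (hG : IsGaussBinomial G) (e : ℕ → ℕ) (n : ℕ) :
    signedGaussSum G e (n + 2) = X ^ e 0 +
      ∑ p ∈ antidiagonal n, (-1) ^ (p.2 + 1) * X ^ e (p.2 + 1) * G (p.1 + 1) (p.2 + 1) := by
  rw [hG.signedGaussSum_succ, Nat.sum_antidiagonal_succ, hG.eq_zero_of_lt 0 (n + 2) (by omega)]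
  simp

theorem signedGaussSum_choose_two_add_two (hG : IsGaussBinomial G) (n : ℕ) :
    signedGaussSum G (·.choose 2) (n + 2) =
      signedGaussSum G (fun i ↦ (i + 1).choose 2) (n + 1) -
        signedGaussSum G (fun i ↦ (i + 1).choose 2) n := by
  rw [hG.signedGaussSum_add_two, hG.signedGaussSum_succ, signedGaussSum, add_sub_assoc,
    ← sum_sub_distrib]
  refine congrArg _ (sum_congr rfl fun p _ ↦ ?_)
  rw [hG.succ_succ, Nat.choose_succ_succ' (p.2 + 1), Nat.choose_one_right]
  ring

theorem signedGaussSum_choose_succ_two_add_two (hG : IsGaussBinomial G) (n : ℕ) :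
    signedGaussSum G (fun i ↦ (i + 1).choose 2) (n + 2) =
      signedGaussSum G (fun i ↦ (i + 1).choose 2) (n + 1) -
        X ^ (n + 1) * signedGaussSum G (·.choose 2) n := by
  rw [hG.signedGaussSum_add_two, hG.signedGaussSum_succ, signedGaussSum, mul_sum, add_sub_assoc,
    ← sum_sub_distrib]
  refine congrArg _ (sum_congr rfl fun p hp ↦ ?_)
  rw [HasAntidiagonal.mem_antidiagonal] at hp
  have hX := hG.X_pow_mul_X_pow_sub_mul p.1 p.2
  rw [hG.succ_succ', Nat.choose_succ_succ' (p.2 + 1) 1, Nat.choose_succ_succ' p.2 1,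
    Nat.choose_one_right, Nat.choose_one_right, ← hp]
  linear_combination (-1) ^ (p.2 + 1) * X ^ (p.2.choose 2 + p.2 + 1) * hX

theorem signedGaussSum_choose_two_add_three (hG : IsGaussBinomial G) (n : ℕ) :
    signedGaussSum G (·.choose 2) (n + 3) = -X ^ (n + 1) * signedGaussSum G (·.choose 2) n := by
  rw [hG.signedGaussSum_choose_two_add_two, hG.signedGaussSum_choose_succ_two_add_two]
  ring

theorem signedGaussSum_choose_two_three_mul (hG : IsGaussBinomial G) (k : ℕ) :
    signedGaussSum G (·.choose 2) (3 * k) = (-1) ^ k * X ^ (3 * k.choose 2 + k) := by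
  induction k with
  | zero => simp [signedGaussSum, hG.zero_right]
  | succ k ih =>
    rw [show 3 * (k + 1) = 3 * k + 3 by ring, hG.signedGaussSum_choose_two_add_three, ih,
      Nat.choose_succ_succ', Nat.choose_one_right]
    ring

end IsGaussBinomial

theorem Nat.mul_three_mul_sub_one_div_two (k : ℕ) : k * (3 * k - 1) / 2 = 3 * k.choose 2 + k := by
  have hk : k * (3 * k - 1) = 3 * (k * (k - 1)) + 2 * k := by
    cases k with
    | zero => rfl
    | succ j => rw [show 3 * (j + 1) - 1 = 3 * j + 2 by omega, Nat.add_sub_cancel]; ring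
  have := (Nat.even_mul_pred_self k).two_dvd
  rw [Nat.choose_two_right]
  omega

theorem gauss_alternating_sum_three_k
    (G : ℕ → ℕ → Polynomial ℤ)
    (hG : ∀ m k : ℕ, k ≤ m →
      G m k * ∏ i ∈ Finset.range k, (1 - (X : Polynomial ℤ) ^ (i + 1)) =
        ∏ i ∈ Finset.range k, (1 - (X : Polynomial ℤ) ^ (m - i)))
    (hG0 : ∀ m k : ℕ, m < k → G m k = 0)
    (k : ℕ) :
    ∑ i ∈ Finset.range (3 * k / 2 + 1),
        (-1 : Polynomial ℤ) ^ i * X ^ (i * (i - 1) / 2) * G (3 * k - i) i =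
      (-1 : Polynomial ℤ) ^ k * X ^ (k * (3 * k - 1) / 2) := by
  have hGauss : IsGaussBinomial G := ⟨hG, hG0⟩
  have hvanish : ∀ i ∈ range (3 * k + 1), i ∉ range (3 * k / 2 + 1) →
      (-1 : Polynomial ℤ) ^ i * X ^ (i * (i - 1) / 2) * G (3 * k - i) i = 0 := by
    intro i _ hi
    rw [mem_range] at hi
    rw [hG0 _ _ (by omega), mul_zero]
  rw [sum_subset (range_subset_range.2 (by omega)) hvanish, Nat.mul_three_mul_sub_one_div_two,
    ← hGauss.signedGaussSum_choose_two_three_mul, signedGaussSum_eq_sum_range]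
  simp only [Nat.choose_two_right]
end

section
/- For every natural number k, the following identity of polynomials in ℤ[q] holds: Σ_{i=0}^{⌊(3k+1)/2⌋} (−1)^i · q^(i(i−1)/2) · [3k+1−i choose i]_q = (−1)^k · q^(k(3k+1)/2), where [m choose n]_q denotes the Gaussian (q-)binomial coefficient. -/
/-!
Write `D n = ∑ (-1)^i q^(i choose 2) [n-i, i]_q` and `E n = ∑ (-1)^i q^(i+1 choose 2) [n-i, i]_q`
(`qAltSum` and `qAltSum'`).
The two q-Pascal rules turn these into the coupled recurrences `D (n+2) = E (n+1) - E n` and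
`E (n+2) = E (n+1) - q^(n+1) D n`, which combine to `D (n+3) = -q^(n+1) D n`. Since `D 1 = 1`,
iterating gives `D (3k+1) = (-1)^k q^(2 + 5 + ⋯ + (3k-1))`.
-/

open Polynomial Finset Finset.Nat

lemma Nat.succ_choose_two (j : ℕ) : (j + 1).choose 2 = j.choose 2 + j := by
  rw [Nat.choose_succ_succ', Nat.choose_one_right, add_comm]

variable {R : Type*} [CommRing R]

noncomputable def qBinom : ℕ → ℕ → R[X]
  | _, 0 => 1
  | 0, _ + 1 => 0
  | m + 1, k + 1 => qBinom m k + X ^ (k + 1) * qBinom m (k + 1)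

@[simp]
lemma qBinom_zero_right (m : ℕ) : (qBinom m 0 : R[X]) = 1 := by
  cases m <;> rfl

@[simp]
lemma qBinom_zero_succ (k : ℕ) : (qBinom 0 (k + 1) : R[X]) = 0 := rfl

lemma qBinom_succ_succ (m k : ℕ) :
    (qBinom (m + 1) (k + 1) : R[X]) = qBinom m k + X ^ (k + 1) * qBinom m (k + 1) := rfl

lemma qBinom_eq_zero_of_lt {m k : ℕ} (h : m < k) : (qBinom m k : R[X]) = 0 := by
  induction m generalizing k with
  | zero => obtain ⟨k, rfl⟩ := Nat.exists_eq_add_one_of_ne_zero h.ne'; rfl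
  | succ m ih =>
    obtain ⟨k, rfl⟩ := Nat.exists_eq_add_one_of_ne_zero (by omega : k ≠ 0)
    rw [qBinom_succ_succ, ih (by omega), ih (by omega), mul_zero, add_zero]

/-- The second q-Pascal rule `[m+1, k+1] = [m, k+1] + X^(m-k) [m, k]`, multiplied by `X ^ k` so
that it holds for all `m, k` without truncated subtraction. -/
lemma X_pow_mul_qBinom_succ_succ (m k : ℕ) :
    X ^ k * (qBinom (m + 1) (k + 1) : R[X]) = X ^ k * qBinom m (k + 1) + X ^ m * qBinom m k := by
  induction m generalizing k with
  | zero => cases k <;> simp [qBinom_succ_succ]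
  | succ m ih =>
    cases k with
    | zero =>
      have h := ih 0
      simp only [qBinom_succ_succ, qBinom_zero_right, pow_zero, one_mul] at h ⊢
      linear_combination X * h
    | succ k =>
      have h₀ := ih k
      have h₁ := ih (k + 1)
      simp only [qBinom_succ_succ] at h₀ h₁ ⊢
      linear_combination X * h₀ + X ^ (k + 2) * h₁

lemma prod_one_sub_X_pow_sub_eq_zero {m k : ℕ} (h : m < k) :
    ∏ i ∈ range k, (1 - (X : R[X]) ^ (m - i)) = 0 :=
  prod_eq_zero (mem_range.2 h) (by simp)

lemma qBinom_mul_prod_one_sub_X_pow (m k : ℕ) :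
    qBinom m k * ∏ i ∈ range k, (1 - X ^ (i + 1)) = ∏ i ∈ range k, (1 - (X : R[X]) ^ (m - i)) := by
  induction m generalizing k with
  | zero => cases k <;> simp [prod_range_succ']
  | succ m ih =>
    cases k with
    | zero => simp
    | succ k =>
      by_cases hkm : m < k
      · rw [qBinom_eq_zero_of_lt (by omega), zero_mul, prod_one_sub_X_pow_sub_eq_zero (by omega)]
      have hpow : (X : R[X]) ^ (k + 1) * X ^ (m - k) = X ^ (m + 1) := by
        rw [← pow_add]; congr 1; omega
      have h₀ := ih k
      have h₁ := ih (k + 1)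
      rw [prod_range_succ, prod_range_succ] at h₁
      rw [qBinom_succ_succ, prod_range_succ, prod_range_succ']
      simp only [Nat.add_sub_add_right, Nat.sub_zero]
      linear_combination (1 - X ^ (k + 1)) * h₀ + X ^ (k + 1) * h₁
        - (∏ i ∈ range k, (1 - (X : R[X]) ^ (m - i))) * hpow

lemma eq_qBinom_of_mul_prod_one_sub_X_pow [IsDomain R] {G : ℕ → ℕ → R[X]}
    (hG : ∀ m k : ℕ, k ≤ m →
      G m k * ∏ i ∈ range k, (1 - X ^ (i + 1)) = ∏ i ∈ range k, (1 - (X : R[X]) ^ (m - i)))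
    (hG0 : ∀ m k : ℕ, m < k → G m k = 0) :
    G = qBinom := by
  ext1 m; ext1 k
  rcases le_or_gt k m with hkm | hkm
  · have hprod : ∏ i ∈ range k, (1 - (X : R[X]) ^ (i + 1)) ≠ 0 :=
      prod_ne_zero_iff.2 fun i _ h ↦ by simpa using congrArg (eval 0) h
    exact mul_right_cancel₀ hprod ((hG m k hkm).trans (qBinom_mul_prod_one_sub_X_pow m k).symm)
  · rw [hG0 m k hkm, qBinom_eq_zero_of_lt hkm]

noncomputable def qAltSum (n : ℕ) : R[X] :=
  ∑ p ∈ antidiagonal n, (-1) ^ p.1 * X ^ p.1.choose 2 * qBinom p.2 p.1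

noncomputable def qAltSum' (n : ℕ) : R[X] :=
  ∑ p ∈ antidiagonal n, (-1) ^ p.1 * X ^ (p.1 + 1).choose 2 * qBinom p.2 p.1

lemma qAltSum'_succ (n : ℕ) :
    (qAltSum' (n + 1) : R[X]) = 1 +
      ∑ p ∈ antidiagonal n, (-1) ^ (p.1 + 1) * X ^ (p.1 + 2).choose 2 * qBinom p.2 (p.1 + 1) := by
  simp [qAltSum', sum_antidiagonal_succ]

lemma qAltSum_add_two (n : ℕ) : (qAltSum (n + 2) : R[X]) = qAltSum' (n + 1) - qAltSum' n := by
  rw [qAltSum, sum_antidiagonal_succ, sum_antidiagonal_succ', qAltSum'_succ, qAltSum']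
  simp only [qBinom_zero_right, qBinom_zero_succ, Nat.choose_zero_succ, mul_zero, zero_add,
    pow_zero, mul_one]
  rw [add_sub_assoc, ← sum_sub_distrib]
  refine congrArg _ (sum_congr rfl fun p _ ↦ ?_)
  rw [qBinom_succ_succ, Nat.succ_choose_two (p.1 + 1)]
  ring

lemma qAltSum'_add_two (n : ℕ) :
    (qAltSum' (n + 2) : R[X]) = qAltSum' (n + 1) - X ^ (n + 1) * qAltSum n := by
  rw [qAltSum', sum_antidiagonal_succ, sum_antidiagonal_succ', qAltSum'_succ, qAltSum]
  simp only [qBinom_zero_right, qBinom_zero_succ, Nat.choose_succ_self, zero_add, mul_zero,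
    pow_zero, mul_one]
  rw [add_sub_assoc, mul_sum, ← sum_sub_distrib]
  refine congrArg _ (sum_congr rfl fun p hp ↦ ?_)
  obtain rfl := mem_antidiagonal.1 hp
  rw [Nat.succ_choose_two (p.1 + 1), Nat.succ_choose_two]
  linear_combination (-1) ^ (p.1 + 1) * X ^ (p.1.choose 2 + p.1 + 1) *
    X_pow_mul_qBinom_succ_succ (R := R) p.2 p.1

lemma qAltSum_add_three (n : ℕ) : (qAltSum (n + 3) : R[X]) = -(X ^ (n + 1) * qAltSum n) := by
  rw [qAltSum_add_two, qAltSum'_add_two]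
  ring

lemma qAltSum_three_mul_add_one (k : ℕ) :
    (qAltSum (3 * k + 1) : R[X]) = (-1) ^ k * X ^ (k * (3 * k + 1) / 2) := by
  induction k with
  | zero => simp [qAltSum, sum_antidiagonal_succ]
  | succ k ih =>
    have hexp : (k + 1) * (3 * k + 1 + 3) / 2 = (3 * k + 1 + 1) + k * (3 * k + 1) / 2 := by
      rw [show (k + 1) * (3 * k + 1 + 3) = k * (3 * k + 1) + 2 * (3 * k + 2) by ring,
        Nat.add_mul_div_left _ _ two_pos]
      ring
    rw [show 3 * (k + 1) + 1 = 3 * k + 1 + 3 by ring, qAltSum_add_three, ih, hexp]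
    ring

lemma qAltSum_eq_sum_range (n : ℕ) :
    (qAltSum n : R[X]) =
      ∑ i ∈ range (n / 2 + 1), (-1) ^ i * X ^ (i * (i - 1) / 2) * qBinom (n - i) i := by
  rw [qAltSum, sum_antidiagonal_eq_sum_range_succ
    (fun i a ↦ (-1 : R[X]) ^ i * X ^ i.choose 2 * qBinom a i)]
  have hsub : range (n / 2 + 1) ⊆ range (n + 1) := range_subset_range.2 (by omega)
  rw [← sum_subset hsub fun i hi hni ↦ ?_]
  · exact sum_congr rfl fun i _ ↦ by rw [Nat.choose_two_right]
  · rw [mem_range] at hi hni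
    rw [qBinom_eq_zero_of_lt (by omega), mul_zero]

theorem gauss_alternating_sum_three_k_plus_one
    (G : ℕ → ℕ → Polynomial ℤ)
    (hG : ∀ m k : ℕ, k ≤ m →
      G m k * ∏ i ∈ Finset.range k, (1 - (X : Polynomial ℤ) ^ (i + 1)) =
        ∏ i ∈ Finset.range k, (1 - (X : Polynomial ℤ) ^ (m - i)))
    (hG0 : ∀ m k : ℕ, m < k → G m k = 0)
    (k : ℕ) :
    ∑ i ∈ Finset.range ((3 * k + 1) / 2 + 1),
        (-1 : Polynomial ℤ) ^ i * X ^ (i * (i - 1) / 2) * G (3 * k + 1 - i) i =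
      (-1 : Polynomial ℤ) ^ k * X ^ (k * (3 * k + 1) / 2) := by
  obtain rfl := eq_qBinom_of_mul_prod_one_sub_X_pow hG hG0
  rw [← qAltSum_eq_sum_range, qAltSum_three_mul_add_one]
end

section
/- For every natural number k, the following identity of polynomials in ℤ[q] holds: Σ_{i=0}^{⌊(3k+2)/2⌋} (−1)^i · q^(i(i−1)/2) · [3k+2−i choose i]_q = 0, where [m choose n]_q denotes the Gaussian (q-)binomial coefficient. -/
open Polynomial Finset

/-!
Let `S n = ∑ᵢ (-1)^i q^(i choose 2) [n-i, i]_q` and let `T n` be the same sum with weight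
`q^(i+1 choose 2)`. Splitting off the `i = 0` term and expanding the remaining coefficients
with the two q-Pascal rules gives `S (n+2) = T (n+1) - T n` and
`T (n+2) = T (n+1) - q^(n+1) S n`, hence `S (n+3) = -q^(n+1) S n`.
As `S 2 = 1 - 1 + 0 = 0`, the sum vanishes at every `n = 3k+2`.
The Gaussian binomial is defined by the first Pascal rule; the product formula identifies it
with `G` and yields the second rule.
-/

noncomputable def qBinomial : ℕ → ℕ → ℤ[X]
  | _, 0 => 1
  | 0, _ + 1 => 0
  | m + 1, n + 1 => qBinomial m n + X ^ (n + 1) * qBinomial m (n + 1)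

noncomputable def qPochhammer (n : ℕ) : ℤ[X] :=
  ∏ i ∈ range n, (1 - X ^ (i + 1))

noncomputable def qDescPochhammer (m n : ℕ) : ℤ[X] :=
  ∏ i ∈ range n, (1 - X ^ (m - i))

@[simp] lemma qBinomial_zero_right (m : ℕ) : qBinomial m 0 = 1 := by cases m <;> rfl

@[simp] lemma qBinomial_zero_succ (n : ℕ) : qBinomial 0 (n + 1) = 0 := rfl

lemma qBinomial_succ_succ (m n : ℕ) :
    qBinomial (m + 1) (n + 1) = qBinomial m n + X ^ (n + 1) * qBinomial m (n + 1) := rfl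

lemma qBinomial_eq_zero_of_lt {m n : ℕ} (h : m < n) : qBinomial m n = 0 := by
  induction m generalizing n with
  | zero => obtain ⟨n, rfl⟩ := Nat.exists_eq_add_of_lt h; rfl
  | succ m ih =>
    obtain ⟨n, rfl⟩ := Nat.exists_eq_add_of_lt (Nat.zero_lt_of_lt h)
    rw [qBinomial_succ_succ, ih (by omega), ih (by omega), mul_zero, add_zero]

lemma qPochhammer_succ (n : ℕ) : qPochhammer (n + 1) = qPochhammer n * (1 - X ^ (n + 1)) :=
  prod_range_succ _ n

lemma qPochhammer_ne_zero (n : ℕ) : qPochhammer n ≠ 0 :=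
  prod_ne_zero_iff.2 fun i _ h => by simpa using congrArg (eval 0) h

lemma qDescPochhammer_succ (m n : ℕ) :
    qDescPochhammer m (n + 1) = qDescPochhammer m n * (1 - X ^ (m - n)) :=
  prod_range_succ _ n

lemma qDescPochhammer_succ_succ (m n : ℕ) :
    qDescPochhammer (m + 1) (n + 1) = (1 - X ^ (m + 1)) * qDescPochhammer m n := by
  simp [qDescPochhammer, prod_range_succ', mul_comm]

lemma qDescPochhammer_eq_zero_of_lt {m n : ℕ} (h : m < n) : qDescPochhammer m n = 0 :=
  prod_eq_zero (mem_range.2 h) (by simp)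

lemma qBinomial_mul_qPochhammer (m n : ℕ) :
    qBinomial m n * qPochhammer n = qDescPochhammer m n := by
  induction m generalizing n with
  | zero =>
    cases n with
    | zero => simp [qPochhammer, qDescPochhammer]
    | succ n => rw [qBinomial_zero_succ, zero_mul, qDescPochhammer_eq_zero_of_lt n.succ_pos]
  | succ m ih =>
    cases n with
    | zero => simp [qPochhammer, qDescPochhammer]
    | succ n =>
      rcases lt_or_ge m n with h | h
      · rw [qBinomial_eq_zero_of_lt (by omega), zero_mul, qDescPochhammer_succ_succ,
          qDescPochhammer_eq_zero_of_lt h, mul_zero]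
      have hX : (X : ℤ[X]) ^ (n + 1) * X ^ (m - n) = X ^ (m + 1) := by
        rw [← pow_add]; congr 1; omega
      have h₀ := ih n
      have h₁ := ih (n + 1)
      rw [qPochhammer_succ, qDescPochhammer_succ] at h₁
      rw [qBinomial_succ_succ, qPochhammer_succ, qDescPochhammer_succ_succ]
      linear_combination (1 - X ^ (n + 1)) * h₀ + X ^ (n + 1) * h₁ - qDescPochhammer m n * hX

lemma eq_qBinomial_of_mul_qPochhammer {p : ℤ[X]} {m n : ℕ}
    (h : p * qPochhammer n = qDescPochhammer m n) : p = qBinomial m n :=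
  mul_right_cancel₀ (qPochhammer_ne_zero n) (h.trans (qBinomial_mul_qPochhammer m n).symm)

lemma qBinomial_succ_right_mul (m n : ℕ) :
    qBinomial m (n + 1) * (1 - X ^ (n + 1)) = qBinomial m n * (1 - X ^ (m - n)) := by
  apply mul_left_cancel₀ (qPochhammer_ne_zero n)
  have h₀ := qBinomial_mul_qPochhammer m n
  have h₁ := qBinomial_mul_qPochhammer m (n + 1)
  rw [qPochhammer_succ, qDescPochhammer_succ] at h₁
  linear_combination h₁ - (1 - X ^ (m - n)) * h₀

lemma X_pow_mul_qBinomial_succ_succ (m n : ℕ) :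
    X ^ (n + 1) * qBinomial (m + 1) (n + 1) =
      X ^ (n + 1) * qBinomial m (n + 1) + X ^ (m + 1) * qBinomial m n := by
  rcases lt_or_ge m n with h | h
  · simp [qBinomial_eq_zero_of_lt, h, Nat.lt_succ_of_lt h]
  have hX : (X : ℤ[X]) ^ (n + 1) * X ^ (m - n) = X ^ (m + 1) := by
    rw [← pow_add]; congr 1; omega
  rw [qBinomial_succ_succ]
  linear_combination (-X ^ (n + 1)) * qBinomial_succ_right_mul m n + qBinomial m n * hX

lemma Nat.succ_choose_two_s4 (n : ℕ) : (n + 1).choose 2 = n.choose 2 + n := by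
  rw [Nat.choose_succ_succ', Nat.choose_one_right, add_comm]

-- Indexed by `(i, n - i) ∈ antidiagonal n`, so that the recursions involve no truncated `n - i`.
noncomputable def altSum (n : ℕ) : ℤ[X] :=
  ∑ p ∈ antidiagonal n, (-1) ^ p.1 * X ^ p.1.choose 2 * qBinomial p.2 p.1

noncomputable def shiftedAltSum (n : ℕ) : ℤ[X] :=
  ∑ p ∈ antidiagonal n, (-1) ^ p.1 * X ^ (p.1 + 1).choose 2 * qBinomial p.2 p.1

lemma shiftedAltSum_succ (n : ℕ) :
    shiftedAltSum (n + 1) = 1 + ∑ p ∈ antidiagonal n,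
      (-1) ^ (p.1 + 1) * X ^ (p.1 + 2).choose 2 * qBinomial p.2 (p.1 + 1) := by
  simp [shiftedAltSum, Nat.sum_antidiagonal_succ]

lemma altSum_add_two (n : ℕ) : altSum (n + 2) = shiftedAltSum (n + 1) - shiftedAltSum n := by
  rw [altSum, Nat.sum_antidiagonal_succ, Nat.sum_antidiagonal_succ', shiftedAltSum_succ,
    shiftedAltSum, add_sub_assoc, ← sum_sub_distrib]
  simp only [qBinomial_zero_right, qBinomial_eq_zero_of_lt (Nat.succ_pos (n + 1)), mul_zero,
    zero_add, pow_zero, Nat.choose_zero_succ, mul_one]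
  congr 1
  refine sum_congr rfl fun p _ => ?_
  rw [qBinomial_succ_succ, Nat.succ_choose_two_s4 (p.1 + 1)]
  ring

lemma shiftedAltSum_add_two (n : ℕ) :
    shiftedAltSum (n + 2) = shiftedAltSum (n + 1) - X ^ (n + 1) * altSum n := by
  rw [shiftedAltSum_succ, Nat.sum_antidiagonal_succ', shiftedAltSum_succ, altSum, mul_sum,
    add_sub_assoc, ← sum_sub_distrib]
  simp only [qBinomial_eq_zero_of_lt (Nat.succ_pos (n + 1)), mul_zero, zero_add]
  congr 1
  refine sum_congr rfl fun p hp => ?_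
  have hX := X_pow_mul_qBinomial_succ_succ p.2 p.1
  rw [Nat.succ_choose_two_s4 (p.1 + 1), Nat.succ_choose_two_s4, ← mem_antidiagonal.1 hp]
  linear_combination (-1) ^ (p.1 + 1) * X ^ (p.1.choose 2 + p.1) * hX

lemma altSum_add_three (n : ℕ) : altSum (n + 3) = -(X ^ (n + 1) * altSum n) := by
  rw [altSum_add_two, shiftedAltSum_add_two]; ring

lemma altSum_three_mul_add_two (k : ℕ) : altSum (3 * k + 2) = 0 := by
  induction k with
  | zero => simp [altSum_add_two 0, shiftedAltSum, Nat.sum_antidiagonal_succ]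
  | succ k ih =>
    rw [show 3 * (k + 1) + 2 = 3 * k + 2 + 3 by ring, altSum_add_three, ih, mul_zero, neg_zero]

lemma altSum_eq_sum_range (n : ℕ) :
    altSum n = ∑ i ∈ range (n / 2 + 1), (-1) ^ i * X ^ i.choose 2 * qBinomial (n - i) i := by
  rw [altSum, Nat.sum_antidiagonal_eq_sum_range_succ_mk]
  refine (sum_subset (range_subset_range.2 (by omega)) fun i hi hi' => ?_).symm
  rw [mem_range] at hi hi'
  rw [qBinomial_eq_zero_of_lt (by omega), mul_zero]

theorem gauss_alternating_sum_three_k_plus_two_general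
    (G : ℕ → ℕ → Polynomial ℤ)
    (hG : ∀ m k : ℕ, k ≤ m →
      G m k * ∏ i ∈ Finset.range k, (1 - (X : Polynomial ℤ) ^ (i + 1)) =
        ∏ i ∈ Finset.range k, (1 - (X : Polynomial ℤ) ^ (m - i)))
    (k : ℕ) :
    ∑ i ∈ Finset.range ((3 * k + 2) / 2 + 1),
        (-1 : Polynomial ℤ) ^ i * X ^ (i * (i - 1) / 2) * G (3 * k + 2 - i) i =
      0 := by
  have hG_eq : ∀ i ∈ range ((3 * k + 2) / 2 + 1),
      G (3 * k + 2 - i) i = qBinomial (3 * k + 2 - i) i :=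
    fun i hi => eq_qBinomial_of_mul_qPochhammer (hG _ _ (by rw [mem_range] at hi; omega))
  rw [← altSum_three_mul_add_two k, altSum_eq_sum_range]
  exact sum_congr rfl fun i hi => by rw [hG_eq i hi, Nat.choose_two_right]

theorem gauss_alternating_sum_three_k_plus_two
    (G : ℕ → ℕ → Polynomial ℤ)
    (hG : ∀ m k : ℕ, k ≤ m →
      G m k * ∏ i ∈ Finset.range k, (1 - (X : Polynomial ℤ) ^ (i + 1)) =
        ∏ i ∈ Finset.range k, (1 - (X : Polynomial ℤ) ^ (m - i)))
    (hG0 : ∀ m k : ℕ, m < k → G m k = 0)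
    (k : ℕ) :
    ∑ i ∈ Finset.range ((3 * k + 2) / 2 + 1),
        (-1 : Polynomial ℤ) ^ i * X ^ (i * (i - 1) / 2) * G (3 * k + 2 - i) i =
      0 :=
  gauss_alternating_sum_three_k_plus_two_general G hG k
end

section
/- Let A : ℕ → ℕ → ℤ[q] be the family of polynomials determined by A n 0 = 1 for all n ≥ 1, A 0 r = 0 for all r ≥ 1, and the recurrence A (n+1) (r+1) = q^(r+1) · A n (r+1) + (q^(n−r) − q^r) · A n r for all n, r ≥ 0. Then for every n ≥ 1, the following identity holds in ℤ[q]: Σ_{r=0}^{⌊n/2⌋} A n r = Σ_{l=0}^{⌊n/2⌋} (C(n, l) − C(n, l−1)) · q^(ln − l²) · ( Σ_{i=0}^{⌊(n−2l)/2⌋} (−1)^i · q^(i(i−1)/2) · [n−2l−i choose i]_q ), where [m choose k]_q is the Gaussian binomial coefficient and C(m,k) is the ordinary binomial coefficient with C(m,k) = 0 unless 0 ≤ k ≤ m. -/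
open Polynomial

/-- Ordinary binomial coefficient with an integer lower index, with the
convention that `C(m, k) = 0` unless `0 ≤ k ≤ m`. -/
def intChoose (m : ℕ) (k : ℤ) : ℤ :=
  if 0 ≤ k then (m.choose k.toNat : ℤ) else 0

/-!
For `2 r ≤ n`, `A n r` has the closed form
`∑_{l + i = r} (C(n, l) - C(n, l - 1)) q^(l (n - l)) (-1)^i q^(i (i - 1) / 2) [n - 2l - i choose i]_q`,
because the closed form obeys the same recurrence: the ballot numbers `C(n, l) - C(n, l - 1)`
satisfy Pascal's rule, and after that split the recurrence reduces term by term to the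
`q`-Pascal rule combined with the absorption identity
`[m + 1 choose i]_q (1 - q^(m + 1 - i)) = (1 - q^(m + 1)) [m choose i]_q`.
On the edge `n = 2 r - 1`, where the recurrence for `A (2 r) r` reaches outside the range `2 r ≤ n`,
both `A` and the closed form vanish, the latter since `C(2r - 1, r) = C(2r - 1, r - 1)`.
Summing the closed form over `r ≤ n / 2` and regrouping by `l` gives the identity.
-/

open Finset

theorem Finset.sum_range_sum_antidiagonal {M : Type*} [AddCommMonoid M] (f : ℕ → ℕ → M)
    (N : ℕ) :
    ∑ r ∈ range (N + 1), ∑ p ∈ antidiagonal r, f p.1 p.2 =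
      ∑ l ∈ range (N + 1), ∑ i ∈ range (N + 1 - l), f l i := by
  simp only [Nat.sum_antidiagonal_eq_sum_range_succ f]
  rw [sum_comm' (t' := range (N + 1)) (s' := fun l => Ico l (N + 1)) (by simp only [mem_range, mem_Ico]; omega)]
  simp [sum_Ico_eq_sum_range]

namespace Polynomial

variable {R : Type*} [CommRing R]

theorem prod_range_succ_one_sub_X_pow_sub (m k : ℕ) :
    ∏ i ∈ range (k + 1), (1 - X ^ (m + 1 - i) : R[X]) =
      (1 - X ^ (m + 1)) * ∏ i ∈ range k, (1 - X ^ (m - i)) := by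
  simp only [prod_range_succ', Nat.add_sub_add_right, Nat.sub_zero, mul_comm]

theorem prod_range_one_sub_X_pow_succ_ne_zero [IsDomain R] (k : ℕ) :
    ∏ i ∈ range k, (1 - X ^ (i + 1) : R[X]) ≠ 0 :=
  prod_ne_zero_iff.mpr fun i _ h =>
    X_pow_sub_C_ne_zero i.succ_pos (1 : R) (by rw [C_1, ← neg_sub, h, neg_zero])

end Polynomial

structure IsQBinomial {R : Type*} [CommRing R] (G : ℕ → ℕ → R[X]) : Prop where
  mul_prod_eq : ∀ m k, k ≤ m →
    G m k * ∏ i ∈ range k, (1 - X ^ (i + 1)) = ∏ i ∈ range k, (1 - X ^ (m - i))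
  eq_zero_of_lt : ∀ m k, m < k → G m k = 0

namespace IsQBinomial

variable {R : Type*} [CommRing R] {G : ℕ → ℕ → R[X]}

theorem zero_right (hG : IsQBinomial G) (m : ℕ) : G m 0 = 1 := by
  simpa using hG.mul_prod_eq m 0 (Nat.zero_le m)

variable [IsDomain R]

theorem self (hG : IsQBinomial G) (m : ℕ) : G m m = 1 := by
  refine mul_right_cancel₀ (prod_range_one_sub_X_pow_succ_ne_zero m) ?_
  rw [hG.mul_prod_eq m m le_rfl, one_mul,
    ← prod_range_reflect (fun i => (1 - X ^ (i + 1) : R[X]))]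
  refine prod_congr rfl fun i hi => ?_
  rw [mem_range] at hi
  rw [show m - 1 - i + 1 = m - i by omega]

theorem succ_mul_one_sub_X_pow (hG : IsQBinomial G) (m i : ℕ) :
    G (m + 1) i * (1 - X ^ (m + 1 - i)) = (1 - X ^ (m + 1)) * G m i := by
  rcases lt_or_ge m i with hmi | him
  · rcases (Nat.succ_le_of_lt hmi).eq_or_lt with rfl | hmi
    · rw [hG.eq_zero_of_lt m (m + 1) (by omega), Nat.sub_self, pow_zero, sub_self, mul_zero,
        mul_zero]
    · rw [hG.eq_zero_of_lt m i (by omega), hG.eq_zero_of_lt (m + 1) i hmi, zero_mul, mul_zero]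
  refine mul_right_cancel₀ (prod_range_one_sub_X_pow_succ_ne_zero i) ?_
  rw [mul_right_comm, hG.mul_prod_eq (m + 1) i (by omega), mul_assoc, hG.mul_prod_eq m i him,
    ← prod_range_succ_one_sub_X_pow_sub, prod_range_succ]

theorem succ_succ (hG : IsQBinomial G) (m i : ℕ) :
    G (m + 1) (i + 1) = X ^ (i + 1) * G m (i + 1) + G m i := by
  rcases lt_trichotomy i m with him | rfl | hmi
  · refine mul_right_cancel₀ (prod_range_one_sub_X_pow_succ_ne_zero (i + 1)) ?_
    obtain ⟨d, rfl⟩ : ∃ d, m = i + 1 + d := ⟨m - (i + 1), by omega⟩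
    have hm : G (i + 1 + d) (i + 1) * ∏ j ∈ range (i + 1), (1 - X ^ (j + 1)) =
        (∏ j ∈ range i, (1 - X ^ (i + 1 + d - j))) * (1 - X ^ (d + 1)) := by
      rw [hG.mul_prod_eq _ _ (by omega), prod_range_succ, show i + 1 + d - i = d + 1 by omega]
    rw [hG.mul_prod_eq _ _ (by omega), prod_range_succ_one_sub_X_pow_sub, add_mul, mul_assoc, hm,
      prod_range_succ (fun j => (1 - X ^ (j + 1) : R[X])) i,
      ← mul_assoc (G (i + 1 + d) i), hG.mul_prod_eq _ _ (by omega)]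
    ring
  · rw [hG.self, hG.self, hG.eq_zero_of_lt i (i + 1) (by omega), mul_zero, zero_add]
  · rw [hG.eq_zero_of_lt (m + 1) (i + 1) (by omega), hG.eq_zero_of_lt m (i + 1) (by omega),
      hG.eq_zero_of_lt m i hmi, mul_zero, zero_add]

end IsQBinomial

theorem intChoose_of_neg (n : ℕ) {k : ℤ} (hk : k < 0) : intChoose n k = 0 := by
  simp [intChoose, not_le.mpr hk]

theorem intChoose_succ (n : ℕ) (k : ℤ) :
    intChoose (n + 1) k = intChoose n k + intChoose n (k - 1) := by
  rcases lt_trichotomy k 0 with hk | rfl | hk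
  · simp [intChoose_of_neg _ hk, intChoose_of_neg _ (show k - 1 < 0 by omega)]
  · simp [intChoose]
  · obtain ⟨j, rfl⟩ : ∃ j : ℕ, k = j + 1 := ⟨k.toNat - 1, by omega⟩
    simp only [intChoose, add_sub_cancel_right, show (0 : ℤ) ≤ j + 1 by omega,
      show (0 : ℤ) ≤ j by omega, if_true, show ((j : ℤ) + 1).toNat = j + 1 by omega,
      Int.toNat_natCast, Nat.choose_succ_succ', Nat.cast_add]
    ring

def ballot (n : ℕ) (l : ℤ) : ℤ :=
  intChoose n l - intChoose n (l - 1)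

theorem ballot_succ (n : ℕ) (l : ℤ) : ballot (n + 1) l = ballot n l + ballot n (l - 1) := by
  simp only [ballot, intChoose_succ]
  ring

theorem ballot_of_neg (n : ℕ) {l : ℤ} (hl : l < 0) : ballot n l = 0 := by
  rw [ballot, intChoose_of_neg n hl, intChoose_of_neg n (by omega), sub_zero]

theorem ballot_zero (n : ℕ) : ballot n 0 = 1 := by
  simp [ballot, intChoose]

theorem ballot_two_mul_add_one (r : ℕ) : ballot (2 * r + 1) (r + 1) = 0 := by
  simp [ballot, intChoose, show (0 : ℤ) ≤ r + 1 by omega, show ((r : ℤ) + 1).toNat = r + 1 by omega,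
    Nat.choose_symm_half]

section ClosedForm

variable {R : Type*} [CommRing R]

noncomputable def kirillovTerm (G : ℕ → ℕ → R[X]) (n l i : ℕ) : R[X] :=
  X ^ (l * n - l ^ 2) * ((-1) ^ i * X ^ (i * (i - 1) / 2) * G (n - 2 * l - i) i)

noncomputable def kirillovSum (G : ℕ → ℕ → R[X]) (n r : ℕ) : R[X] :=
  ∑ p ∈ antidiagonal r, (ballot n p.1 : R[X]) * kirillovTerm G n p.1 p.2

variable {G : ℕ → ℕ → R[X]}

theorem kirillovTerm_succ_zero (hG : IsQBinomial G) {n l : ℕ} (hl : l ≤ n) :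
    kirillovTerm G (n + 1) l 0 = X ^ l * kirillovTerm G n l 0 := by
  simp only [kirillovTerm, hG.zero_right, sq, ← Nat.mul_sub, show n + 1 - l = n - l + 1 by omega]
  ring

theorem kirillovTerm_succ [IsDomain R] (hG : IsQBinomial G) {n l i : ℕ} (h : 2 * (l + i) < n) :
    kirillovTerm G (n + 1) l (i + 1) + kirillovTerm G (n + 1) (l + 1) i =
      X ^ (l + i + 1) * kirillovTerm G n l (i + 1) +
        (X ^ (n - (l + i)) - X ^ (l + i)) * kirillovTerm G n l i := by
  obtain ⟨m, rfl⟩ : ∃ m, n = m + 2 * l + 2 * i + 1 := ⟨n - (2 * l + 2 * i + 1), by omega⟩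
  have pascal := hG.succ_succ (m + i) i
  have absorb := hG.succ_mul_one_sub_X_pow (m + i) i
  simp only [kirillovTerm, sq, ← Nat.mul_sub, Nat.triangle_succ,
    show m + 2 * l + 2 * i + 1 + 1 - l = m + l + 2 * i + 1 + 1 by omega,
    show m + 2 * l + 2 * i + 1 + 1 - (l + 1) = m + l + 2 * i + 1 by omega,
    show m + 2 * l + 2 * i + 1 - l = m + l + 2 * i + 1 by omega,
    show m + 2 * l + 2 * i + 1 + 1 - 2 * l - (i + 1) = m + i + 1 by omega,
    show m + 2 * l + 2 * i + 1 + 1 - 2 * (l + 1) - i = m + i by omega,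
    show m + 2 * l + 2 * i + 1 - 2 * l - (i + 1) = m + i by omega,
    show m + 2 * l + 2 * i + 1 - 2 * l - i = m + i + 1 by omega,
    show m + 2 * l + 2 * i + 1 - (l + i) = m + l + i + 1 by omega,
    show m + i + 1 - i = m + 1 by omega] at absorb ⊢
  linear_combination (-1) ^ i * X ^ (l * (m + l + 2 * i + 1) + i * (i - 1) / 2 + l + i) *
    (absorb - pascal)

theorem kirillovSum_zero (hG : IsQBinomial G) (n : ℕ) : kirillovSum G n 0 = 1 := by
  simp [kirillovSum, kirillovTerm, ballot_zero, hG.zero_right]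

theorem kirillovSum_two_mul_add_one (hG : IsQBinomial G) (r : ℕ) :
    kirillovSum G (2 * r + 1) (r + 1) = 0 := by
  rw [kirillovSum, Nat.sum_antidiagonal_succ', sum_eq_zero fun p hp => ?_]
  · simp [ballot_two_mul_add_one]
  · rw [HasAntidiagonal.mem_antidiagonal] at hp
    rw [kirillovTerm, hG.eq_zero_of_lt _ _ (by omega), mul_zero, mul_zero, mul_zero]

theorem kirillovSum_succ_succ [IsDomain R] (hG : IsQBinomial G) {n r : ℕ} (h : 2 * r < n) :
    kirillovSum G (n + 1) (r + 1) =
      X ^ (r + 1) * kirillovSum G n (r + 1) + (X ^ (n - r) - X ^ r) * kirillovSum G n r := by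
  have hsplit : kirillovSum G (n + 1) (r + 1) =
      ∑ p ∈ antidiagonal (r + 1), (ballot n p.1 : R[X]) * kirillovTerm G (n + 1) p.1 p.2 +
        ∑ p ∈ antidiagonal (r + 1), (ballot n (p.1 - 1) : R[X]) * kirillovTerm G (n + 1) p.1 p.2 := by
    simp only [kirillovSum, ballot_succ, Int.cast_add, add_mul, sum_add_distrib]
  have hshift : ∑ p ∈ antidiagonal (r + 1),
      (ballot n (p.1 - 1) : R[X]) * kirillovTerm G (n + 1) p.1 p.2 =
        ∑ p ∈ antidiagonal r, (ballot n p.1 : R[X]) * kirillovTerm G (n + 1) (p.1 + 1) p.2 := by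
    simp [Nat.sum_antidiagonal_succ, ballot_of_neg]
  have hterm : ∀ p ∈ antidiagonal r,
      (ballot n p.1 : R[X]) * kirillovTerm G (n + 1) p.1 (p.2 + 1) +
          (ballot n p.1 : R[X]) * kirillovTerm G (n + 1) (p.1 + 1) p.2 =
        X ^ (r + 1) * ((ballot n p.1 : R[X]) * kirillovTerm G n p.1 (p.2 + 1)) +
          (X ^ (n - r) - X ^ r) * ((ballot n p.1 : R[X]) * kirillovTerm G n p.1 p.2) := by
    rintro ⟨l, i⟩ hp
    rw [HasAntidiagonal.mem_antidiagonal] at hp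
    subst hp
    linear_combination (ballot n l : R[X]) * kirillovTerm_succ hG h
  rw [hsplit, hshift, kirillovSum, kirillovSum, Nat.sum_antidiagonal_succ',
    Nat.sum_antidiagonal_succ', kirillovTerm_succ_zero hG (by omega), add_assoc,
    ← sum_add_distrib, sum_congr rfl hterm, sum_add_distrib, ← mul_sum, ← mul_sum]
  ring

end ClosedForm

structure IsKirillovA {R : Type*} [CommRing R] (A : ℕ → ℕ → R[X]) : Prop where
  zero_right : ∀ n, 1 ≤ n → A n 0 = 1
  zero_left : ∀ r, 1 ≤ r → A 0 r = 0
  succ_succ : ∀ n r, A (n + 1) (r + 1) = X ^ (r + 1) * A n (r + 1) + (X ^ (n - r) - X ^ r) * A n r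

namespace IsKirillovA

variable {R : Type*} [CommRing R] {A : ℕ → ℕ → R[X]}

theorem eq_zero_of_lt_two_mul (hA : IsKirillovA A) : ∀ n r, n < 2 * r → A n r = 0
  | 0, r, h => hA.zero_left r (by omega)
  | n + 1, 0, h => by omega
  | n + 1, r + 1, h => by
    rw [hA.succ_succ, hA.eq_zero_of_lt_two_mul n (r + 1) (by omega), mul_zero, zero_add]
    rcases (show n < 2 * r ∨ n = 2 * r by omega) with h | rfl
    · rw [hA.eq_zero_of_lt_two_mul n r h, mul_zero]
    · rw [show 2 * r - r = r by omega, sub_self, zero_mul]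

theorem eq_kirillovSum [IsDomain R] {G : ℕ → ℕ → R[X]} (hA : IsKirillovA A)
    (hG : IsQBinomial G) {n : ℕ} (hn : 1 ≤ n) : ∀ r, 2 * r ≤ n → A n r = kirillovSum G n r := by
  induction n, hn using Nat.le_induction with
  | base =>
    rintro (_ | r) hr
    · rw [hA.zero_right 1 le_rfl, kirillovSum_zero hG]
    · omega
  | succ n hn ih =>
    rintro (_ | r) hr
    · rw [hA.zero_right (n + 1) (by omega), kirillovSum_zero hG]
    have hnext : A n (r + 1) = kirillovSum G n (r + 1) := by
      rcases (show 2 * (r + 1) ≤ n ∨ n = 2 * r + 1 by omega) with h | rfl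
      · exact ih (r + 1) h
      · rw [hA.eq_zero_of_lt_two_mul _ _ (by omega), kirillovSum_two_mul_add_one hG]
    rw [hA.succ_succ, hnext, ih r (by omega), kirillovSum_succ_succ hG (by omega)]

end IsKirillovA

theorem kirillov_A_sum_factored (A : ℕ → ℕ → Polynomial ℤ)
    (hA1 : ∀ n : ℕ, 1 ≤ n → A n 0 = 1)
    (hA0 : ∀ r : ℕ, 1 ≤ r → A 0 r = 0)
    (hrec : ∀ n r : ℕ, A (n + 1) (r + 1) =
      (X : Polynomial ℤ) ^ (r + 1) * A n (r + 1) +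
        ((X : Polynomial ℤ) ^ (n - r) - (X : Polynomial ℤ) ^ r) * A n r)
    (G : ℕ → ℕ → Polynomial ℤ)
    (hG : ∀ m k : ℕ, k ≤ m →
      G m k * ∏ i ∈ Finset.range k, (1 - (X : Polynomial ℤ) ^ (i + 1)) =
        ∏ i ∈ Finset.range k, (1 - (X : Polynomial ℤ) ^ (m - i)))
    (hG0 : ∀ m k : ℕ, m < k → G m k = 0)
    (n : ℕ) (hn : 1 ≤ n) :
    ∑ r ∈ Finset.range (n / 2 + 1), A n r =
      ∑ l ∈ Finset.range (n / 2 + 1),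
        Polynomial.C (intChoose n (l : ℤ) - intChoose n ((l : ℤ) - 1)) *
          (X : Polynomial ℤ) ^ (l * n - l ^ 2) *
          ∑ i ∈ Finset.range ((n - 2 * l) / 2 + 1),
            (-1 : Polynomial ℤ) ^ i * (X : Polynomial ℤ) ^ (i * (i - 1) / 2) *
              G (n - 2 * l - i) i := by
  have hAk : IsKirillovA A := ⟨hA1, hA0, hrec⟩
  have hGq : IsQBinomial G := ⟨hG, hG0⟩
  calc ∑ r ∈ range (n / 2 + 1), A n r
      = ∑ r ∈ range (n / 2 + 1), kirillovSum G n r :=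
        sum_congr rfl fun r hr => hAk.eq_kirillovSum hGq hn r (by rw [mem_range] at hr; omega)
    _ = ∑ l ∈ range (n / 2 + 1), ∑ i ∈ range (n / 2 + 1 - l),
          (ballot n l : ℤ[X]) * kirillovTerm G n l i :=
        sum_range_sum_antidiagonal (fun l i => (ballot n l : ℤ[X]) * kirillovTerm G n l i) _
    _ = _ := sum_congr rfl fun l hl => by
        rw [show n / 2 + 1 - l = (n - 2 * l) / 2 + 1 by rw [mem_range] at hl; omega, mul_sum]
        refine sum_congr rfl fun i _ => ?_
        rw [kirillovTerm, ballot, ← C_eq_intCast, Int.cast_id]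
        ring
end

section
/- Let q be a prime power, F a finite field with q elements, and n ≥ 1. Let A : ℕ → ℕ → ℤ[t] be the family of polynomials determined by A m 0 = 1 for all m ≥ 1, A 0 r = 0 for all r ≥ 1, and the recurrence A (m+1) (r+1) = t^(r+1) · A m (r+1) + (t^(m−r) − t^r) · A m r for all m, r ≥ 0. Then the number of n×n upper-triangular matrices X over F (i.e., X i j = 0 for i > j) with X² = 0 equals the evaluation at t = q of the polynomial Σ_{r=0}^{n} A n r. -/
open Matrix
set_option linter.unusedSectionVars false
set_option maxHeartbeats 1000000
namespace SqZeroAux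
variable {F : Type} [Field F] [Fintype F]

/-- extension by zero as a linear map -/
def ezero (n : ℕ) : (Fin n → F) →ₗ[F] (Fin (n+1) → F) where
  toFun w := Fin.snoc w 0
  map_add' w w' := by
    funext i
    refine Fin.lastCases ?_ (fun i => ?_) i <;> simp
  map_smul' c w := by
    funext i
    refine Fin.lastCases ?_ (fun i => ?_) i <;> simp

lemma ezero_injective (n : ℕ) : Function.Injective (ezero (F := F) n) := by
  intro a b h
  funext i
  have := congrFun h (Fin.castSucc i)
  simpa [ezero] using this

def mk {n : ℕ} (Z : Matrix (Fin n) (Fin n) F) (v : Fin n → F) :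
    Matrix (Fin (n+1)) (Fin (n+1)) F :=
  Matrix.of fun i j =>
    Fin.lastCases 0 (fun i' => Fin.lastCases (v i') (fun j' => Z i' j') j) i

@[simp] lemma mk_last {n : ℕ} (Z : Matrix (Fin n) (Fin n) F) (v : Fin n → F)
    (j : Fin (n+1)) : mk Z v (Fin.last n) j = 0 := by
  simp [mk]

@[simp] lemma mk_castSucc_last {n : ℕ} (Z : Matrix (Fin n) (Fin n) F) (v : Fin n → F)
    (i : Fin n) : mk Z v i.castSucc (Fin.last n) = v i := by
  simp [mk]

@[simp] lemma mk_castSucc_castSucc {n : ℕ} (Z : Matrix (Fin n) (Fin n) F) (v : Fin n → F)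
    (i j : Fin n) : mk Z v i.castSucc j.castSucc = Z i j := by
  simp [mk]

lemma mk_mulVec {n : ℕ} (Z : Matrix (Fin n) (Fin n) F) (v : Fin n → F)
    (u : Fin (n+1) → F) :
    (mk Z v).mulVec u = ezero n (Z.mulVec (u ∘ Fin.castSucc) + u (Fin.last n) • v) := by
  funext i
  refine Fin.lastCases ?_ (fun i => ?_) i
  · simp [Matrix.mulVec, dotProduct, ezero]
  · simp only [Matrix.mulVec, dotProduct, ezero, LinearMap.coe_mk, AddHom.coe_mk,
      Fin.snoc_castSucc, Pi.add_apply, Pi.smul_apply, smul_eq_mul]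
    rw [Fin.sum_univ_castSucc]
    simp [mul_comm]

lemma mk_mul_mk {n : ℕ} (Z : Matrix (Fin n) (Fin n) F) (v : Fin n → F) :
    mk Z v * mk Z v = mk (Z * Z) (Z.mulVec v) := by
  ext i j
  refine Fin.lastCases ?_ (fun i => ?_) i
  · simp [Matrix.mul_apply]
  · refine Fin.lastCases ?_ (fun j => ?_) j
    · simp only [Matrix.mul_apply, mk_castSucc_last]
      rw [Fin.sum_univ_castSucc]
      simp [Matrix.mulVec, dotProduct]
    · simp only [Matrix.mul_apply, mk_castSucc_castSucc]
      rw [Fin.sum_univ_castSucc]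
      simp [Matrix.mul_apply]

lemma mk_eq_zero_iff {n : ℕ} (Z : Matrix (Fin n) (Fin n) F) (v : Fin n → F) :
    mk Z v = 0 ↔ Z = 0 ∧ v = 0 := by
  constructor
  · intro h
    constructor
    · ext i j
      have := congrFun (congrFun h i.castSucc) j.castSucc
      simpa using this
    · funext i
      have := congrFun (congrFun h i.castSucc) (Fin.last n)
      simpa using this
  · rintro ⟨rfl, rfl⟩
    ext i j
    refine Fin.lastCases ?_ (fun i => ?_) i <;>
      [skip; refine Fin.lastCases ?_ (fun j => ?_) j] <;> simp


def UT {n : ℕ} (M : Matrix (Fin n) (Fin n) F) : Prop := ∀ i j, j < i → M i j = 0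

lemma diag_zero {n : ℕ} {Y : Matrix (Fin n) (Fin n) F} (h1 : UT Y) (h2 : Y * Y = 0)
    (i : Fin n) : Y i i = 0 := by
  have key : (Y * Y) i i = Y i i * Y i i := by
    rw [Matrix.mul_apply]
    refine Finset.sum_eq_single i (fun k _ hk => ?_) (by simp)
    rcases lt_or_gt_of_ne hk with h | h
    · rw [h1 i k h, zero_mul]
    · rw [h1 k i h, mul_zero]
  have : Y i i * Y i i = 0 := by rw [← key, h2]; simp
  exact mul_self_eq_zero.mp this


lemma UT_mk {n : ℕ} (Z : Matrix (Fin n) (Fin n) F) (v : Fin n → F) :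
    UT (mk Z v) ↔ UT Z := by
  constructor
  · intro h i j hij
    have := h i.castSucc j.castSucc (by simpa using hij)
    simpa using this
  · intro h i j hij
    revert hij
    refine Fin.lastCases ?_ (fun i' => ?_) i <;> intro hij
    · simp
    · revert hij
      refine Fin.lastCases ?_ (fun j' => ?_) j <;> intro hij
      · exact absurd hij (not_lt.mpr (Fin.castSucc_lt_last i').le)
      · rw [mk_castSucc_castSucc]
        exact h i' j' (by simpa using hij)

lemma eq_mk {n : ℕ} {Y : Matrix (Fin (n+1)) (Fin (n+1)) F} (h1 : UT Y) (h2 : Y * Y = 0) :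
    Y = mk (Y.submatrix Fin.castSucc Fin.castSucc) (fun i => Y i.castSucc (Fin.last n)) := by
  ext i j
  refine Fin.lastCases ?_ (fun i' => ?_) i
  · rw [mk_last]
    refine Fin.lastCases ?_ (fun j' => ?_) j
    · exact diag_zero h1 h2 _
    · exact h1 _ _ (Fin.castSucc_lt_last j')
  · refine Fin.lastCases ?_ (fun j' => ?_) j
    · rw [mk_castSucc_last]
    · rw [mk_castSucc_castSucc, Matrix.submatrix_apply]

lemma range_mk {n : ℕ} (Z : Matrix (Fin n) (Fin n) F) (v : Fin n → F) :
    LinearMap.range (mk Z v).mulVecLin =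
      Submodule.map (ezero n) (LinearMap.range Z.mulVecLin ⊔ Submodule.span F {v}) := by
  ext w
  simp only [LinearMap.mem_range, Submodule.mem_map, Matrix.mulVecLin_apply]
  constructor
  · rintro ⟨u, rfl⟩
    exact ⟨Z.mulVec (u ∘ Fin.castSucc) + u (Fin.last n) • v,
      Submodule.add_mem _ (Submodule.mem_sup_left ⟨_, rfl⟩)
        (Submodule.mem_sup_right (Submodule.smul_mem _ _ (Submodule.mem_span_singleton_self v))),
      (mk_mulVec Z v u).symm⟩
  · rintro ⟨x, hx, rfl⟩
    rcases Submodule.mem_sup.mp hx with ⟨y, hy, z, hz, rfl⟩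
    rcases hy with ⟨a, rfl⟩
    rcases Submodule.mem_span_singleton.mp hz with ⟨c, rfl⟩
    refine ⟨Fin.snoc a c, ?_⟩
    have hcast : (Fin.snoc a c ∘ Fin.castSucc : Fin n → F) = a := by funext i; simp
    rw [mk_mulVec, hcast, Fin.snoc_last]
    simp [Matrix.mulVecLin_apply]

lemma rank_mk_of_mem {n : ℕ} (Z : Matrix (Fin n) (Fin n) F) (v : Fin n → F)
    (hv : v ∈ LinearMap.range Z.mulVecLin) : (mk Z v).rank = Z.rank := by
  rw [Matrix.rank, range_mk,
    ← LinearEquiv.finrank_eq (Submodule.equivMapOfInjective _ (ezero_injective n) _),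
    sup_eq_left.mpr (Submodule.span_le.mpr (by simpa using hv))]
  rfl

lemma rank_mk_of_not_mem {n : ℕ} (Z : Matrix (Fin n) (Fin n) F) (v : Fin n → F)
    (hv : v ∉ LinearMap.range Z.mulVecLin) : (mk Z v).rank = Z.rank + 1 := by
  rw [Matrix.rank, range_mk,
    ← LinearEquiv.finrank_eq (Submodule.equivMapOfInjective _ (ezero_injective n) _)]
  · have hvne : v ≠ 0 := fun h => hv (h ▸ Submodule.zero_mem _)
    have h1 : Module.finrank F (Submodule.span F {v}) = 1 := finrank_span_singleton hvne
    have hinf : LinearMap.range Z.mulVecLin ⊓ Submodule.span F {v} = ⊥ := by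
      rw [eq_bot_iff]
      rintro x ⟨hx1, hx2⟩
      rcases Submodule.mem_span_singleton.mp hx2 with ⟨c, rfl⟩
      rcases eq_or_ne c 0 with rfl | hc
      · simp
      · refine absurd ?_ hv
        have h2 := Submodule.smul_mem (LinearMap.range Z.mulVecLin) c⁻¹ hx1
        rwa [smul_smul, inv_mul_cancel₀ hc, one_smul] at h2
    have key := Submodule.finrank_sup_add_finrank_inf_eq
      (LinearMap.range Z.mulVecLin) (Submodule.span F {v})
    rw [hinf, finrank_bot, add_zero, h1] at key
    rw [Matrix.rank]
    omega

lemma col_le_ker {n : ℕ} {Z : Matrix (Fin n) (Fin n) F} (h : Z * Z = 0) :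
    LinearMap.range Z.mulVecLin ≤ LinearMap.ker Z.mulVecLin := by
  rintro x ⟨u, rfl⟩
  simp only [LinearMap.mem_ker, Matrix.mulVecLin_apply, Matrix.mulVec_mulVec, h,
    Matrix.zero_mulVec]

lemma rank_eq_zero {n : ℕ} {Z : Matrix (Fin n) (Fin n) F} (h : Z.rank = 0) : Z = 0 := by
  have : LinearMap.range Z.mulVecLin = ⊥ := by
    rw [Matrix.rank] at h
    exact Submodule.finrank_eq_zero.mp h
  rw [LinearMap.range_eq_bot] at this
  ext i j
  classical
  have := congrFun (congrFun (congrArg DFunLike.coe this) (Pi.single j 1)) i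
  simpa [Matrix.mulVecLin_apply, Matrix.mulVec_single_one] using this


def peelEquiv {n : ℕ} (R : ℕ → Prop) :
    {Y : Matrix (Fin (n+1)) (Fin (n+1)) F //
        (∀ i j, j < i → Y i j = 0) ∧ Y * Y = 0 ∧ R Y.rank} ≃
    {p : Matrix (Fin n) (Fin n) F × (Fin n → F) //
        ((∀ i j, j < i → p.1 i j = 0) ∧ p.1 * p.1 = 0 ∧ p.1.mulVec p.2 = 0) ∧
          R (mk p.1 p.2).rank} where
  toFun Y :=
    ⟨(Y.1.submatrix Fin.castSucc Fin.castSucc, fun i => Y.1 i.castSucc (Fin.last n)), by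
      obtain ⟨Y, hUT, hsq, hR⟩ := Y
      have he := eq_mk (show UT Y from hUT) hsq
      have h0 : mk (Y.submatrix Fin.castSucc Fin.castSucc * Y.submatrix Fin.castSucc Fin.castSucc)
          ((Y.submatrix Fin.castSucc Fin.castSucc).mulVec fun i => Y i.castSucc (Fin.last n))
            = 0 := by
        rw [← mk_mul_mk, ← he, hsq]
      rw [mk_eq_zero_iff] at h0
      refine ⟨⟨?_, h0.1, h0.2⟩, ?_⟩
      · exact (UT_mk _ _).mp (he ▸ (show UT Y from hUT))
      · rw [← he]; exact hR⟩
  invFun p :=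
    ⟨mk p.1.1 p.1.2,
      ⟨(UT_mk _ _).mpr (fun i j h => p.2.1.1 i j h), by
        rw [mk_mul_mk, p.2.1.2.1, p.2.1.2.2]
        exact (mk_eq_zero_iff _ _).mpr ⟨rfl, rfl⟩, p.2.2⟩⟩
  left_inv Y := Subtype.ext (eq_mk (show UT Y.1 from Y.2.1) Y.2.2.1).symm
  right_inv p := Subtype.ext (by
    obtain ⟨⟨Z, v⟩, h⟩ := p
    refine Prod.ext ?_ ?_
    · ext i j; simp
    · funext i; simp)

lemma fiber_eq {n r : ℕ} (Z : Matrix (Fin n) (Fin n) F)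
    [Decidable ((∀ i j, j < i → Z i j = 0) ∧ Z * Z = 0 ∧ Z.rank = r + 1)]
    [Decidable ((∀ i j, j < i → Z i j = 0) ∧ Z * Z = 0 ∧ Z.rank = r)] :
    (Nat.card {v : Fin n → F //
        ((∀ i j, j < i → Z i j = 0) ∧ Z * Z = 0 ∧ Z.mulVec v = 0) ∧
          (mk Z v).rank = r + 1} : ℤ) =
      (if (∀ i j, j < i → Z i j = 0) ∧ Z * Z = 0 ∧ Z.rank = r + 1
        then (Fintype.card F : ℤ) ^ (r + 1) else 0) +
      (if (∀ i j, j < i → Z i j = 0) ∧ Z * Z = 0 ∧ Z.rank = r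
        then (Fintype.card F : ℤ) ^ (n - r) - (Fintype.card F : ℤ) ^ r else 0) := by
  by_cases hc : (∀ i j, j < i → Z i j = 0) ∧ Z * Z = 0
  · obtain ⟨hUT, hsq⟩ := hc
    set C := LinearMap.range Z.mulVecLin with hC
    set K := LinearMap.ker Z.mulVecLin with hK
    have hCK : C ≤ K := col_le_ker hsq
    have hrk : Module.finrank F C = Z.rank := rfl
    by_cases h1 : Z.rank = r + 1
    · rw [if_pos ⟨hUT, hsq, h1⟩, if_neg (by rintro ⟨-, -, h⟩; omega), add_zero]
      have e : {v : Fin n → F //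
          ((∀ i j, j < i → Z i j = 0) ∧ Z * Z = 0 ∧ Z.mulVec v = 0) ∧
            (mk Z v).rank = r + 1} ≃ C := by
        refine Equiv.subtypeEquivRight fun v => ?_
        constructor
        · rintro ⟨⟨-, -, hv⟩, hr⟩
          by_contra hvC
          rw [rank_mk_of_not_mem Z v hvC, h1] at hr
          omega
        · intro hvC
          have hvK : v ∈ K := hCK hvC
          refine ⟨⟨hUT, hsq, ?_⟩, ?_⟩
          · simpa [Matrix.mulVecLin_apply, hK] using hvK
          · rw [rank_mk_of_mem Z v hvC, h1]
      classical
      rw [Nat.card_congr e, Nat.card_eq_fintype_card, Module.card_eq_pow_finrank (K := F) (V := C),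
        hrk, h1]
      push_cast
      ring
    · by_cases h2 : Z.rank = r
      · rw [if_neg (by rintro ⟨-, -, h⟩; omega), if_pos ⟨hUT, hsq, h2⟩, zero_add]
        have e : {v : Fin n → F //
            ((∀ i j, j < i → Z i j = 0) ∧ Z * Z = 0 ∧ Z.mulVec v = 0) ∧
              (mk Z v).rank = r + 1} ≃ {v : Fin n → F // v ∈ K ∧ v ∉ C} := by
          refine Equiv.subtypeEquivRight fun v => ?_
          constructor
          · rintro ⟨⟨-, -, hv⟩, hr⟩
            refine ⟨by simpa [Matrix.mulVecLin_apply, hK] using hv, fun hvC => ?_⟩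
            rw [rank_mk_of_mem Z v hvC, h2] at hr
            omega
          · rintro ⟨hvK, hvC⟩
            refine ⟨⟨hUT, hsq, by simpa [Matrix.mulVecLin_apply, hK] using hvK⟩, ?_⟩
            rw [rank_mk_of_not_mem Z v hvC, h2]
        classical
        rw [Nat.card_congr e]
        have hfin : Module.finrank F K = n - r := by
          have h3 := LinearMap.finrank_range_add_finrank_ker Z.mulVecLin
          rw [Module.finrank_pi, Fintype.card_fin] at h3
          rw [← hC, ← hK, hrk, h2] at h3
          omega
        have hcardK : (Nat.card K : ℤ) = (Fintype.card F : ℤ) ^ (n - r) := by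
          rw [Nat.card_eq_fintype_card, Module.card_eq_pow_finrank (K := F) (V := K), hfin]
          push_cast
          ring
        have hcardC : (Nat.card C : ℤ) = (Fintype.card F : ℤ) ^ r := by
          rw [Nat.card_eq_fintype_card, Module.card_eq_pow_finrank (K := F) (V := C), hrk, h2]
          push_cast
          ring
        have e2 : {x : K // (x : Fin n → F) ∈ C} ≃ C :=
          ⟨fun x => ⟨x.1.1, x.2⟩, fun v => ⟨⟨v.1, hCK v.2⟩, v.2⟩,
            fun x => Subtype.ext (Subtype.ext rfl), fun v => Subtype.ext rfl⟩
        have e3 : {x : K // ¬ (x : Fin n → F) ∈ C} ≃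
            {v : Fin n → F // v ∈ K ∧ v ∉ C} :=
          Equiv.subtypeSubtypeEquivSubtypeInter (fun v : Fin n → F => v ∈ K) (fun v => v ∉ C)
        have hsplit : Nat.card K = Nat.card C + Nat.card {v : Fin n → F // v ∈ K ∧ v ∉ C} := by
          classical
          calc Nat.card K
              = Nat.card ({x : K // (x : Fin n → F) ∈ C} ⊕
                  {x : K // ¬ (x : Fin n → F) ∈ C}) :=
                (Nat.card_congr (Equiv.sumCompl _)).symm
            _ = _ := by rw [Nat.card_sum, Nat.card_congr e2, Nat.card_congr e3]
        have hfin2 : (Nat.card {v : Fin n → F // v ∈ K ∧ v ∉ C} : ℤ) =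
            (Nat.card K : ℤ) - Nat.card C := by
          rw [hsplit]; push_cast; ring
        rw [hfin2, hcardK, hcardC]
      · rw [if_neg (by rintro ⟨-, -, h⟩; omega), if_neg (by rintro ⟨-, -, h⟩; omega), add_zero]
        have : IsEmpty {v : Fin n → F //
            ((∀ i j, j < i → Z i j = 0) ∧ Z * Z = 0 ∧ Z.mulVec v = 0) ∧
              (mk Z v).rank = r + 1} := by
          refine ⟨fun v => ?_⟩
          obtain ⟨v, ⟨-, -, hv⟩, hr⟩ := v
          by_cases hvC : v ∈ C
          · rw [rank_mk_of_mem Z v hvC] at hr; omega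
          · rw [rank_mk_of_not_mem Z v hvC] at hr; omega
        rw [Nat.card_of_isEmpty]
        norm_num
  · rw [if_neg (fun h => hc ⟨h.1, h.2.1⟩), if_neg (fun h => hc ⟨h.1, h.2.1⟩), add_zero]
    have : IsEmpty {v : Fin n → F //
        ((∀ i j, j < i → Z i j = 0) ∧ Z * Z = 0 ∧ Z.mulVec v = 0) ∧
          (mk Z v).rank = r + 1} :=
      ⟨fun v => hc ⟨v.2.1.1, v.2.1.2.1⟩⟩
    rw [Nat.card_of_isEmpty]
    norm_num



lemma step (n r : ℕ) :
    (Nat.card {Y : Matrix (Fin (n+1)) (Fin (n+1)) F //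
        (∀ i j, j < i → Y i j = 0) ∧ Y * Y = 0 ∧ Y.rank = r + 1} : ℤ) =
      (Fintype.card F : ℤ) ^ (r + 1) *
          Nat.card {Z : Matrix (Fin n) (Fin n) F //
            (∀ i j, j < i → Z i j = 0) ∧ Z * Z = 0 ∧ Z.rank = r + 1} +
        ((Fintype.card F : ℤ) ^ (n - r) - (Fintype.card F : ℤ) ^ r) *
          Nat.card {Z : Matrix (Fin n) (Fin n) F //
            (∀ i j, j < i → Z i j = 0) ∧ Z * Z = 0 ∧ Z.rank = r} := by
  classical
  rw [Nat.card_congr ((peelEquiv (fun k => k = r + 1)).trans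
    (Equiv.subtypeProdEquivSigmaSubtype fun (Z : Matrix (Fin n) (Fin n) F) (v : Fin n → F) =>
      ((∀ i j, j < i → Z i j = 0) ∧ Z * Z = 0 ∧ Z.mulVec v = 0) ∧ (mk Z v).rank = r + 1))]
  rw [Nat.card_eq_fintype_card, Fintype.card_sigma]
  push_cast
  simp only [← Nat.card_eq_fintype_card]
  rw [Finset.sum_congr rfl fun Z _ => fiber_eq (r := r) Z]
  rw [Finset.sum_add_distrib, ← Finset.sum_filter, ← Finset.sum_filter,
    Finset.sum_const, Finset.sum_const, nsmul_eq_mul, nsmul_eq_mul,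
    ← Fintype.card_subtype, ← Fintype.card_subtype]
  simp only [← Nat.card_eq_fintype_card]
  ring

lemma partition (n : ℕ) :
    Nat.card {Y : Matrix (Fin n) (Fin n) F // (∀ i j, j < i → Y i j = 0) ∧ Y * Y = 0} =
      ∑ r ∈ Finset.range (n + 1),
        Nat.card {Y : Matrix (Fin n) (Fin n) F //
          (∀ i j, j < i → Y i j = 0) ∧ Y * Y = 0 ∧ Y.rank = r} := by
  classical
  rw [Nat.card_eq_fintype_card, Fintype.card_subtype]
  rw [Finset.card_eq_sum_card_fiberwise (f := fun Y => Y.rank) (t := Finset.range (n+1))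
    (fun Y _ => by
      simp only [Finset.mem_range, Nat.lt_succ_iff]
      simpa using Y.rank_le_card_width)]
  refine Finset.sum_congr rfl fun r hr => ?_
  rw [Finset.filter_filter, ← Fintype.card_subtype, ← Nat.card_eq_fintype_card]
  exact Nat.card_congr (Equiv.subtypeEquivRight fun Y => by tauto)

lemma card_rank_zero (n : ℕ) :
    Nat.card {Y : Matrix (Fin n) (Fin n) F //
      (∀ i j, j < i → Y i j = 0) ∧ Y * Y = 0 ∧ Y.rank = 0} = 1 := by
  have : Unique {Y : Matrix (Fin n) (Fin n) F //
      (∀ i j, j < i → Y i j = 0) ∧ Y * Y = 0 ∧ Y.rank = 0} :=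
    { default := ⟨0, fun i j _ => rfl, by simp, Matrix.rank_zero⟩
      uniq := fun Y => Subtype.ext (rank_eq_zero Y.2.2.2) }
  exact Nat.card_unique

lemma card_one_rank_succ (r : ℕ) :
    Nat.card {Y : Matrix (Fin 1) (Fin 1) F //
      (∀ i j, j < i → Y i j = 0) ∧ Y * Y = 0 ∧ Y.rank = r + 1} = 0 := by
  have : IsEmpty {Y : Matrix (Fin 1) (Fin 1) F //
      (∀ i j, j < i → Y i j = 0) ∧ Y * Y = 0 ∧ Y.rank = r + 1} := by
    refine ⟨fun Y => ?_⟩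
    obtain ⟨Y, hUT, hsq, hr⟩ := Y
    have hzero : Y = 0 := by
      ext i j
      rw [Subsingleton.elim i j]
      simpa using diag_zero (show UT Y from hUT) hsq j
    rw [hzero, Matrix.rank_zero] at hr
    exact Nat.succ_ne_zero r hr.symm
  exact Nat.card_of_isEmpty

end SqZeroAux

open Polynomial

theorem card_square_zero_upper_triangular_eq_eval (q : ℕ)
    (hq : ∃ p k : ℕ, p.Prime ∧ k ≠ 0 ∧ q = p ^ k)
    (F : Type) [Field F] [Fintype F] (hF : Fintype.card F = q)
    (n : ℕ) (hn : 1 ≤ n)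
    (A : ℕ → ℕ → Polynomial ℤ)
    (hA1 : ∀ m : ℕ, 1 ≤ m → A m 0 = 1)
    (hA0 : ∀ r : ℕ, 1 ≤ r → A 0 r = 0)
    (hrec : ∀ m r : ℕ, A (m + 1) (r + 1) =
      (X : Polynomial ℤ) ^ (r + 1) * A m (r + 1) +
        ((X : Polynomial ℤ) ^ (m - r) - (X : Polynomial ℤ) ^ r) * A m r) :
    (Nat.card {Y : Matrix (Fin n) (Fin n) F //
        (∀ i j : Fin n, j < i → Y i j = 0) ∧ Y * Y = 0} : ℤ) =
      Polynomial.eval (q : ℤ) (∑ r ∈ Finset.range (n + 1), A n r) := by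
  classical
  have key : ∀ m, 1 ≤ m → ∀ r : ℕ,
      (Nat.card {Y : Matrix (Fin m) (Fin m) F //
        (∀ i j, j < i → Y i j = 0) ∧ Y * Y = 0 ∧ Y.rank = r} : ℤ) =
      (A m r).eval (q : ℤ) := by
    intro m hm
    induction m, hm using Nat.le_induction with
    | base =>
      intro r
      cases r with
      | zero => rw [SqZeroAux.card_rank_zero, hA1 1 le_rfl]; simp
      | succ r =>
        rw [SqZeroAux.card_one_rank_succ]
        cases r with
        | zero =>
          rw [hrec 0 0, hA0 1 le_rfl]
          simp
        | succ r =>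
          rw [hrec 0 (r + 1), hA0 (r + 2) (by omega), hA0 (r + 1) (by omega)]
          simp
    | succ m hm ih =>
      intro r
      cases r with
      | zero => rw [SqZeroAux.card_rank_zero, hA1 (m + 1) (by omega)]; simp
      | succ r =>
        rw [SqZeroAux.step (F := F) m r, ih (r + 1), ih r, hrec m r, hF]
        simp only [Polynomial.eval_add, Polynomial.eval_mul, Polynomial.eval_pow,
          Polynomial.eval_X, Polynomial.eval_sub]
  rw [SqZeroAux.partition (F := F) n, Polynomial.eval_finset_sum, Nat.cast_sum]
  exact Finset.sum_congr rfl fun r _ => key n hn r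
end
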